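/- Let a > 1 and let x ∈ [1,∞)⁶ satisfy xᵢ ≤ a for all 2 ≤ i ≤ 6. Then φ(x) ≤ max { φ(x₁, a, a, 1, a, a), φ(x₁, a, 1, 1, a, 1), φ(x₁, a, a, 1, a, 1) }. -/

import Mathlib

/-!
Since the coefficient `1 - x₁²` of `x₄` in the numerator is nonpositive, `φ` only grows when
`x₄` is lowered to `1`. With `x₄ = 1`, as a function of any one of `x₂, x₃, x₅, x₆` alone,
`φ` has the form `(α u + β) / (√(u² + 2 b u + c) · E)` with `β ≤ α b`. The numerator of its
derivative is `(α b - β) u + (α c - β b)`, nondecreasing in `u`, so `φ` first decreases and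
then increases, and its maximum over `[1, a]` is at an endpoint. This reduces the claim to the
sixteen corners `{1, a}⁴`. The symmetries `(x₂, x₃, x₅, x₆) ↦ (x₆, x₅, x₃, x₂)` and
`(x₃, x₂, x₆, x₅)` of `φ` leave seven orbits of corners, each compared directly with one of
the three configurations.
-/

open Real

/-- The cosine of the dihedral angle at the edge `e₁` of a generalized hyper-ideal
tetrahedron whose edge lengths `lᵢ` satisfy `cosh lᵢ = xᵢ`. -/
noncomputable def phi (x1 x2 x3 x4 x5 x6 : ℝ) : ℝ :=
  (x2 * x3 + x5 * x6 + x1 * x2 * x5 + x1 * x3 * x6 - x1 ^ 2 * x4 + x4) /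
    (Real.sqrt (2 * x1 * x2 * x6 + x1 ^ 2 + x2 ^ 2 + x6 ^ 2 - 1) *
      Real.sqrt (2 * x1 * x3 * x5 + x1 ^ 2 + x3 ^ 2 + x5 ^ 2 - 1))

open Set

lemma le_max_endpoints_of_deriv_sign_of_monotoneOn {F F' g : ℝ → ℝ} {l h u : ℝ}
    (hF : ContinuousOn F (Icc l h)) (hF' : ∀ x ∈ Ioo l h, HasDerivAt F (F' x) x)
    (hg : MonotoneOn g (Icc l h)) (hpos : ∀ x ∈ Ioo l h, 0 ≤ g x → 0 ≤ F' x)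
    (hneg : ∀ x ∈ Ioo l h, g x ≤ 0 → F' x ≤ 0) (hu : u ∈ Icc l h) :
    F u ≤ max (F l) (F h) := by
  by_cases hgu : g u ≤ 0
  · have hanti : AntitoneOn F (Icc l u) := by
      refine antitoneOn_of_hasDerivWithinAt_nonpos (f' := F') (convex_Icc l u)
        (hF.mono (Icc_subset_Icc_right hu.2)) (fun x hx => ?_) (fun x hx => ?_) <;>
        rw [interior_Icc] at hx <;> have hx' := Ioo_subset_Ioo_right hu.2 hx
      · exact (hF' x hx').hasDerivWithinAt.mono interior_subset
      · exact hneg x hx' ((hg (Ioo_subset_Icc_self hx') hu hx.2.le).trans hgu)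
    exact le_max_of_le_left (hanti ⟨le_rfl, hu.1⟩ ⟨hu.1, le_rfl⟩ hu.1)
  · have hmono : MonotoneOn F (Icc u h) := by
      refine monotoneOn_of_hasDerivWithinAt_nonneg (f' := F') (convex_Icc u h)
        (hF.mono (Icc_subset_Icc_left hu.1)) (fun x hx => ?_) (fun x hx => ?_) <;>
        rw [interior_Icc] at hx <;> have hx' := Ioo_subset_Ioo_left hu.1 hx
      · exact (hF' x hx').hasDerivWithinAt.mono interior_subset
      · exact hpos x hx'
          ((not_le.mp hgu).le.trans (hg hu (Ioo_subset_Icc_self hx') hx.1.le))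
    exact le_max_of_le_right (hmono ⟨le_rfl, hu.2⟩ ⟨hu.2, le_rfl⟩ hu.2)

lemma linear_div_sqrt_quadratic_le_max_endpoints {α β b c l h u : ℝ} (hαβ : β ≤ α * b)
    (hQ : ∀ x ∈ Icc l h, 0 < x ^ 2 + 2 * b * x + c) (hu : u ∈ Icc l h) :
    (α * u + β) / √(u ^ 2 + 2 * b * u + c) ≤
      max ((α * l + β) / √(l ^ 2 + 2 * b * l + c))
        ((α * h + β) / √(h ^ 2 + 2 * b * h + c)) := by
  have hder (x : ℝ) (hx : 0 < x ^ 2 + 2 * b * x + c) :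
      HasDerivAt (fun y => (α * y + β) / √(y ^ 2 + 2 * b * y + c))
        (((α * b - β) * x + (α * c - β * b)) /
          ((x ^ 2 + 2 * b * x + c) * √(x ^ 2 + 2 * b * x + c))) x := by
    have hQ' : HasDerivAt (fun y => y ^ 2 + 2 * b * y + c) (2 * x + 2 * b) x := by
      simpa using ((hasDerivAt_pow 2 x).add ((hasDerivAt_id x).const_mul (2 * b))).add_const c
    have hs := Real.sqrt_pos.mpr hx
    refine ((((hasDerivAt_id x).const_mul α).add_const β).div (hQ'.sqrt hx.ne')
      hs.ne').congr_deriv ?_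
    have hS2 := Real.sq_sqrt hx.le
    generalize √(x ^ 2 + 2 * b * x + c) = S at hS2 hs ⊢
    rw [← hS2]
    simp only [id]
    field_simp
    linear_combination α * hS2
  have hden {x : ℝ} (hx : x ∈ Ioo l h) :
      0 ≤ (x ^ 2 + 2 * b * x + c) * √(x ^ 2 + 2 * b * x + c) :=
    have := hQ x (Ioo_subset_Icc_self hx)
    by positivity
  refine le_max_endpoints_of_deriv_sign_of_monotoneOn
    (fun x hx => (hder x (hQ x hx)).continuousAt.continuousWithinAt)
    (fun x hx => hder x (hQ x (Ioo_subset_Icc_self hx))) ?_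
    (fun x hx hg => div_nonneg hg (hden hx))
    (fun x hx hg => div_nonpos_of_nonpos_of_nonneg hg (hden hx)) hu
  exact fun x _ y _ hxy => by nlinarith [mul_le_mul_of_nonneg_left hxy (sub_nonneg.mpr hαβ)]

lemma phi_swap_outer (t u v s p q : ℝ) : phi t u v s p q = phi t q p s v u := by
  unfold phi; ring_nf

lemma phi_swap_faces (t u v s p q : ℝ) : phi t u v s p q = phi t v u s q p := by
  unfold phi; ring_nf

lemma phi_le_phi_one_x4 {t s u v p q : ℝ} (ht : 1 ≤ t) (hs : 1 ≤ s) :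
    phi t u v s p q ≤ phi t u v 1 p q := by
  refine div_le_div_of_nonneg_right ?_ (by positivity)
  nlinarith [mul_nonneg (sub_nonneg.mpr (one_le_pow₀ (n := 2) ht)) (sub_nonneg.mpr hs)]

lemma phi_le_of_endpoints_x2 {t u v p q a R : ℝ} (ht : 1 ≤ t) (hp : 1 ≤ p) (hq : 1 ≤ q)
    (hu : u ∈ Icc 1 a) (h1 : phi t 1 v 1 p q ≤ R) (ha : phi t a v 1 p q ≤ R) :
    phi t u v 1 p q ≤ R := by
  have hphi (z : ℝ) : phi t z v 1 p q =
      ((v + t * p) * z + (p * q + t * v * q + 1 - t ^ 2)) /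
        √(z ^ 2 + 2 * (t * q) * z + (t ^ 2 + q ^ 2 - 1)) /
          √(2 * t * v * p + t ^ 2 + v ^ 2 + p ^ 2 - 1) := by
    rw [phi, div_div]
    ring_nf
  have hαβ : p * q + t * v * q + 1 - t ^ 2 ≤ (v + t * p) * (t * q) := by
    nlinarith [mul_nonneg (sub_nonneg.mpr (one_le_pow₀ (n := 2) ht))
      (by positivity : 0 ≤ p * q + 1)]
  have hQ : ∀ x ∈ Icc 1 a, 0 < x ^ 2 + 2 * (t * q) * x + (t ^ 2 + q ^ 2 - 1) := fun x hx => by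
    nlinarith [hx.1, mul_nonneg (by positivity : (0:ℝ) ≤ t * q) (by linarith [hx.1] : (0:ℝ) ≤ x)]
  rw [hphi] at h1 ha ⊢
  refine le_trans ?_ (max_le h1 ha)
  rw [max_div_div_right (by positivity)]
  exact div_le_div_of_nonneg_right
    (linear_div_sqrt_quadratic_le_max_endpoints hαβ hQ hu) (by positivity)

lemma phi_le_of_endpoints_x3 {t u v p q a R : ℝ} (ht : 1 ≤ t) (hp : 1 ≤ p) (hq : 1 ≤ q)
    (hv : v ∈ Icc 1 a) (h1 : phi t u 1 1 p q ≤ R) (ha : phi t u a 1 p q ≤ R) :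
    phi t u v 1 p q ≤ R := by
  rw [phi_swap_faces] at h1 ha ⊢
  exact phi_le_of_endpoints_x2 ht hq hp hv h1 ha

lemma phi_le_of_endpoints_x5 {t u v p q a R : ℝ} (ht : 1 ≤ t) (hu : 1 ≤ u) (hv : 1 ≤ v)
    (hp : p ∈ Icc 1 a) (h1 : phi t u v 1 1 q ≤ R) (ha : phi t u v 1 a q ≤ R) :
    phi t u v 1 p q ≤ R := by
  rw [phi_swap_outer, phi_swap_faces] at h1 ha ⊢
  exact phi_le_of_endpoints_x2 ht hu hv hp h1 ha

lemma phi_le_of_endpoints_x6 {t u v p q a R : ℝ} (ht : 1 ≤ t) (hu : 1 ≤ u) (hv : 1 ≤ v)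
    (hq : q ∈ Icc 1 a) (h1 : phi t u v 1 p 1 ≤ R) (ha : phi t u v 1 p a ≤ R) :
    phi t u v 1 p q ≤ R := by
  rw [phi_swap_outer] at h1 ha ⊢
  exact phi_le_of_endpoints_x2 ht hv hu hq h1 ha

-- `σ` and `τ` generate a Klein four-group acting on `{b, c}⁴` with seven orbits, one
-- representative of each being bounded by hypothesis.
lemma le_of_klein_orbit_reps {α β : Type*} [LE β] {f : α → α → α → α → β} {b c : α} {R : β}
    (hσ : ∀ u v p q, f u v p q = f q p v u) (hτ : ∀ u v p q, f u v p q = f v u q p)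
    (hbbbb : f b b b b ≤ R) (hcbbb : f c b b b ≤ R) (hccbb : f c c b b ≤ R)
    (hcbcb : f c b c b ≤ R) (hcbbc : f c b b c ≤ R) (hcccb : f c c c b ≤ R)
    (hcccc : f c c c c ≤ R) {u v p q : α} (hu : u = b ∨ u = c) (hv : v = b ∨ v = c)
    (hp : p = b ∨ p = c) (hq : q = b ∨ q = c) : f u v p q ≤ R := by
  rcases hu with rfl | rfl <;> rcases hv with rfl | rfl <;> rcases hp with rfl | rfl <;>
    rcases hq with rfl | rfl <;>
    first
    | assumption
    | (rw [hσ]; assumption)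
    | (rw [hτ]; assumption)
    | (rw [hσ, hτ]; assumption)

lemma sqrt_radicand_one_right {t u : ℝ} (h : 0 ≤ t + u) :
    √(2 * t * u * 1 + t ^ 2 + u ^ 2 + 1 ^ 2 - 1) = t + u := by
  rw [← Real.sqrt_sq h]; ring_nf

-- Corners are named by their coordinates `(x₂, x₃, x₅, x₆)`, with `x₄ = 1`.
lemma phi_aaaa_eq {t a : ℝ} (ht : 1 ≤ t) (ha : 1 ≤ a) :
    phi t a a 1 a a = (2 * a ^ 2 + 1 - t) / (2 * a ^ 2 + t - 1) := by
  have hW : 0 ≤ 2 * t * a * a + t ^ 2 + a ^ 2 + a ^ 2 - 1 := by nlinarith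
  rw [phi, Real.mul_self_sqrt hW, div_eq_div_iff (by nlinarith) (by nlinarith)]
  ring

lemma phi_1111_le_aaaa {t a : ℝ} (ht : 1 ≤ t) (ha : 1 ≤ a) :
    phi t 1 1 1 1 1 ≤ phi t a a 1 a a := by
  rw [phi_aaaa_eq ht ha, phi, sqrt_radicand_one_right (by linarith),
    div_le_div_iff₀ (by nlinarith) (by nlinarith)]
  nlinarith [mul_nonneg (mul_nonneg (sub_nonneg.mpr ht) (sub_nonneg.mpr ha))
    (by positivity : (0:ℝ) ≤ t + 1)]

lemma phi_a111_le_aaaa {t a : ℝ} (ht : 1 ≤ t) (ha : 1 ≤ a) :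
    phi t a 1 1 1 1 ≤ phi t a a 1 a a := by
  rw [phi_aaaa_eq ht ha, phi, sqrt_radicand_one_right (by linarith),
    sqrt_radicand_one_right (by linarith), div_le_div_iff₀ (by nlinarith) (by nlinarith)]
  nlinarith [mul_nonneg (mul_nonneg (sub_nonneg.mpr ht) (sub_nonneg.mpr ha))
    (by positivity : (0:ℝ) ≤ t + 1)]

lemma phi_aa11_le_aaaa {t a : ℝ} (ht : 1 ≤ t) (ha : 1 ≤ a) :
    phi t a a 1 1 1 ≤ phi t a a 1 a a := by
  rw [phi_aaaa_eq ht ha, phi, sqrt_radicand_one_right (by linarith),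
    div_le_div_iff₀ (by nlinarith) (by nlinarith)]
  nlinarith [mul_nonneg (mul_nonneg (sub_nonneg.mpr ht) (sub_nonneg.mpr ha))
    (by positivity : (0:ℝ) ≤ 2 * a * t + a + 1)]

lemma phi_a11a_le_aaa1 {t a : ℝ} (ht : 1 ≤ t) (ha : 1 ≤ a) :
    phi t a 1 1 1 a ≤ phi t a a 1 a 1 := by
  have hW : 0 < √(2 * t * a * a + t ^ 2 + a ^ 2 + a ^ 2 - 1) := Real.sqrt_pos.mpr (by nlinarith)
  rw [phi, phi, sqrt_radicand_one_right (by linarith), sqrt_radicand_one_right (by linarith),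
    div_le_div_iff₀ (by positivity) (by positivity)]
  nlinarith [mul_nonneg (mul_nonneg (mul_nonneg (sub_nonneg.mpr ht) (sub_nonneg.mpr ha))
    (by positivity : (0:ℝ) ≤ (a + 1) * (t + 1))) hW.le]

lemma phi_corner_le {t a u v p q : ℝ} (ht : 1 ≤ t) (ha : 1 ≤ a) (hu : u = 1 ∨ u = a)
    (hv : v = 1 ∨ v = a) (hp : p = 1 ∨ p = a) (hq : q = 1 ∨ q = a) :
    phi t u v 1 p q ≤ max (phi t a a 1 a a) (max (phi t a 1 1 a 1) (phi t a a 1 a 1)) :=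
  le_of_klein_orbit_reps (f := fun u v p q => phi t u v 1 p q)
    (fun _ _ _ _ => phi_swap_outer ..) (fun _ _ _ _ => phi_swap_faces ..)
    ((phi_1111_le_aaaa ht ha).trans (le_max_left ..))
    ((phi_a111_le_aaaa ht ha).trans (le_max_left ..))
    ((phi_aa11_le_aaaa ht ha).trans (le_max_left ..))
    ((le_max_left ..).trans (le_max_right ..))
    ((phi_a11a_le_aaa1 ht ha).trans ((le_max_right ..).trans (le_max_right ..)))
    ((le_max_right ..).trans (le_max_right ..))
    (le_max_left ..) hu hv hp hq

theorem phi_upper_bound_three_configs_general (a x1 x2 x3 x4 x5 x6 : ℝ)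
    (h1 : 1 ≤ x1) (h2 : 1 ≤ x2) (h3 : 1 ≤ x3) (h4 : 1 ≤ x4) (h5 : 1 ≤ x5) (h6 : 1 ≤ x6)
    (h2a : x2 ≤ a) (h3a : x3 ≤ a) (h5a : x5 ≤ a) (h6a : x6 ≤ a) :
    phi x1 x2 x3 x4 x5 x6 ≤
      max (phi x1 a a 1 a a) (max (phi x1 a 1 1 a 1) (phi x1 a a 1 a 1)) := by
  set R := max (phi x1 a a 1 a a) (max (phi x1 a 1 1 a 1) (phi x1 a a 1 a 1))
  have h1a : 1 ≤ a := h2.trans h2a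
  have one_le {z : ℝ} (hz : z = 1 ∨ z = a) : 1 ≤ z := hz.elim (·.ge) (·.symm ▸ h1a)
  have hx6 {u v p : ℝ} (hu : u = 1 ∨ u = a) (hv : v = 1 ∨ v = a) (hp : p = 1 ∨ p = a) :
      phi x1 u v 1 p x6 ≤ R :=
    phi_le_of_endpoints_x6 h1 (one_le hu) (one_le hv) ⟨h6, h6a⟩
      (phi_corner_le h1 h1a hu hv hp (.inl rfl)) (phi_corner_le h1 h1a hu hv hp (.inr rfl))
  have hx5 {u v : ℝ} (hu : u = 1 ∨ u = a) (hv : v = 1 ∨ v = a) :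
      phi x1 u v 1 x5 x6 ≤ R :=
    phi_le_of_endpoints_x5 h1 (one_le hu) (one_le hv) ⟨h5, h5a⟩
      (hx6 hu hv (.inl rfl)) (hx6 hu hv (.inr rfl))
  have hx3 {u : ℝ} (hu : u = 1 ∨ u = a) : phi x1 u x3 1 x5 x6 ≤ R :=
    phi_le_of_endpoints_x3 h1 h5 h6 ⟨h3, h3a⟩ (hx5 hu (.inl rfl)) (hx5 hu (.inr rfl))
  calc phi x1 x2 x3 x4 x5 x6 ≤ phi x1 x2 x3 1 x5 x6 := phi_le_phi_one_x4 h1 h4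
    _ ≤ R := phi_le_of_endpoints_x2 h1 h5 h6 ⟨h2, h2a⟩ (hx3 (.inl rfl)) (hx3 (.inr rfl))

theorem phi_upper_bound_three_configs (a x1 x2 x3 x4 x5 x6 : ℝ) (ha : 1 < a)
    (h1 : 1 ≤ x1) (h2 : 1 ≤ x2) (h3 : 1 ≤ x3) (h4 : 1 ≤ x4) (h5 : 1 ≤ x5) (h6 : 1 ≤ x6)
    (h2a : x2 ≤ a) (h3a : x3 ≤ a) (h4a : x4 ≤ a) (h5a : x5 ≤ a) (h6a : x6 ≤ a) :
    phi x1 x2 x3 x4 x5 x6 ≤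
      max (phi x1 a a 1 a a) (max (phi x1 a 1 1 a 1) (phi x1 a a 1 a 1)) :=
  phi_upper_bound_three_configs_general a x1 x2 x3 x4 x5 x6 h1 h2 h3 h4 h5 h6 h2a h3a h5a h6a
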